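/- For every h > 0, the image of the imaginary axis {i·ω : ω ∈ ℝ} under the map ζ_h equals the open segment {i·η : η ∈ ℝ, -π/h < η < π/h} of the imaginary axis. (Note that for real ω one has 1 ± i·hω/2 ≠ 0, so ζ_h(iω) is defined for every ω ∈ ℝ.) -/

import Mathlib

/-!
On the imaginary axis the quotient `(1 + ihω/2)/(1 - ihω/2)` is the Cayley transform of the real
number `hω/2`, whose principal logarithm is `2i·arctan(hω/2)` (this is the definition of the complex
arctangent). Hence `ζ_h(iω) = (2i/h)·arctan(hω/2)`, and since `arctan` maps `ℝ` onto
`(-π/2, π/2)`, the image is the segment `i·(-π/h, π/h)`.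
-/

open Complex Real Set

theorem Complex.log_one_add_ofReal_mul_I_div (x : ℝ) :
    log ((1 + x * I) / (1 - x * I)) = 2 * I * Real.arctan x := by
  rw [ofReal_arctan, arctan]
  linear_combination log ((1 + x * I) / (1 - x * I)) * I_sq

theorem Real.range_const_mul_arctan_mul {a b : ℝ} (ha : a ≠ 0) (hb : 0 < b) :
    range (fun x => b * arctan (a * x)) = Ioo (b * -(π / 2)) (b * (π / 2)) := by
  have hsurj : Function.Surjective (a * ·) := mul_left_surjective₀ ha
  rw [range_comp' (b * arctan ·) (a * ·), hsurj.range_eq, image_univ,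
    range_comp' (b * ·) arctan, range_arctan, image_mul_left_Ioo hb]

theorem stmt1 (h : ℝ) (hh : 0 < h) :
    Set.range (fun ω : ℝ =>
        (1 / (h : ℂ)) * Complex.log
          ((1 + (h : ℂ) * (Complex.I * (ω : ℂ)) / 2) / (1 - (h : ℂ) * (Complex.I * (ω : ℂ)) / 2)))
      = {w : ℂ | ∃ η : ℝ, w = Complex.I * (η : ℂ) ∧ -(Real.pi / h) < η ∧ η < Real.pi / h} := by
  have hζ : ∀ ω : ℝ,
      (1 / (h : ℂ)) * log ((1 + (h : ℂ) * (I * (ω : ℂ)) / 2) / (1 - (h : ℂ) * (I * (ω : ℂ)) / 2))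
        = I * ((2 / h * Real.arctan (h / 2 * ω) : ℝ) : ℂ) := fun ω => by
    have hcayley := log_one_add_ofReal_mul_I_div (h / 2 * ω)
    push_cast at hcayley ⊢
    rw [show (h : ℂ) * (I * ω) / 2 = h / 2 * ω * I by ring, hcayley]
    field_simp [ofReal_ne_zero.mpr hh.ne']
  have hbounds : 2 / h * (π / 2) = π / h := by field_simp
  rw [funext hζ, range_comp' (fun t : ℝ => I * (t : ℂ)),
    Real.range_const_mul_arctan_mul (by positivity) (by positivity), mul_neg, hbounds]
  ext w
  simp only [mem_image, mem_Ioo, mem_ofPred_eq]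
  exact ⟨fun ⟨η, hη, hw⟩ => ⟨η, hw.symm, hη⟩, fun ⟨η, hw, hη⟩ => ⟨η, hη, hw.symm⟩⟩
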